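/- arXiv:2112.01452 — 5 statements merged into one kernel-verified Lean document; each statement's English description precedes it below -/
import Mathlib

section
/- For all 0 < p < q < 1, kl(p,q) ≥ (q − p)² / (2σ²), where σ² = sup_{r ∈ [p,q]} r(1 − r). -/
/-!
As a function of its second argument, `klBer p` vanishes at `p` and has derivative
`(s - p) / (s (1 - s))`, so `klBer p q = ∫ s in p..q, (s - p) / (s (1 - s))`. Bounding the
Bernoulli variance `s (1 - s)` by its maximum `σ²` on `[p, q]` leaves
`∫ s in p..q, (s - p) / σ² = (q - p)² / (2σ²)`.
-/

open Real

/-- The Bernoulli Kullback–Leibler divergence. -/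
noncomputable def klBer (p q : ℝ) : ℝ :=
  p * Real.log (p / q) + (1 - p) * Real.log ((1 - p) / (1 - q))

theorem klBer_self (p : ℝ) : klBer p p = 0 := by
  simp [klBer]

theorem hasDerivAt_klBer_right {p s : ℝ} (hp : p ∈ Set.Ioo 0 1) (hs : s ∈ Set.Ioo 0 1) :
    HasDerivAt (klBer p) ((s - p) / (s * (1 - s))) s := by
  obtain ⟨hp0, hp1⟩ := hp
  obtain ⟨hs0, hs1⟩ := hs
  have hp1' : 1 - p ≠ 0 := by linarith
  have hs1' : 1 - s ≠ 0 := by linarith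
  have hlog : HasDerivAt (fun t => log (p / t)) (-s⁻¹) s :=
    (((hasDerivAt_inv hs0.ne').const_mul p).log (by positivity)).congr_deriv (by field_simp)
  have hlog' : HasDerivAt (fun t => log ((1 - p) / (1 - t))) (1 - s)⁻¹ s :=
    ((((hasDerivAt_id' s).const_sub 1).inv hs1').const_mul (1 - p) |>.log
      (mul_ne_zero hp1' (inv_ne_zero hs1'))).congr_deriv (by field_simp; simp)
  exact ((hlog.const_mul p).add (hlog'.const_mul (1 - p))).congr_deriv (by field_simp; ring)

theorem klBer_eq_integral {p q : ℝ} (hp : p ∈ Set.Ioo 0 1) (hq : q ∈ Set.Ioo 0 1) :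
    klBer p q = ∫ s in p..q, (s - p) / (s * (1 - s)) := by
  have hsub : Set.uIcc p q ⊆ Set.Ioo 0 1 := Set.ordConnected_Ioo.uIcc_subset hp hq
  have hvar_ne : ∀ s ∈ Set.uIcc p q, s * (1 - s) ≠ 0 := fun s hs => by
    obtain ⟨hs0, hs1⟩ := hsub hs
    exact mul_ne_zero hs0.ne' (by linarith)
  rw [intervalIntegral.integral_eq_sub_of_hasDerivAt
      (fun s hs => hasDerivAt_klBer_right hp (hsub hs))
      (ContinuousOn.intervalIntegrable (.div (by fun_prop) (by fun_prop) hvar_ne)),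
    klBer_self, sub_zero]

theorem sq_sub_div_le_klBer {p q v : ℝ} (hp : 0 < p) (hpq : p ≤ q) (hq : q < 1)
    (hv : ∀ s ∈ Set.Icc p q, s * (1 - s) ≤ v) :
    (q - p) ^ 2 / (2 * v) ≤ klBer p q := by
  have hvar_pos : ∀ s ∈ Set.Icc p q, 0 < s * (1 - s) := fun s hs =>
    mul_pos (by linarith [hs.1]) (by linarith [hs.2])
  calc (q - p) ^ 2 / (2 * v) = ∫ s in p..q, (s - p) / v := by
        simp [intervalIntegral.integral_div]
        ring
    _ ≤ ∫ s in p..q, (s - p) / (s * (1 - s)) :=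
        intervalIntegral.integral_mono_on hpq (Continuous.intervalIntegrable (by fun_prop) _ _)
          (ContinuousOn.intervalIntegrable_of_Icc hpq
            (.div (by fun_prop) (by fun_prop) fun s hs => (hvar_pos s hs).ne'))
          fun s hs => div_le_div_of_nonneg_left (by linarith [hs.1]) (hvar_pos s hs) (hv s hs)
    _ = klBer p q := (klBer_eq_integral ⟨hp, by linarith⟩ ⟨by linarith, hq⟩).symm

theorem pinsker_bernoulli (p q : ℝ) (hp : 0 < p) (hpq : p < q) (hq : q < 1) :
    klBer p q ≥ (q - p) ^ 2 / (2 * sSup ((fun r => r * (1 - r)) '' Set.Icc p q)) := by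
  have hbdd : BddAbove ((fun r : ℝ => r * (1 - r)) '' Set.Icc p q) :=
    isCompact_Icc.bddAbove_image (by fun_prop)
  exact sq_sub_div_le_klBer hp hpq.le hq fun s hs => le_csSup hbdd ⟨s, hs, rfl⟩
end

section
/- For all reals 0 < a < b, log(b/a) + a/b − 1 ≥ (b − a)² / (2b²). -/
open Real

open Finset in
/-- The first two terms of the nonnegative series `-log (1 - u) = ∑ uⁿ⁺¹ / (n + 1)`. -/
theorem add_sq_div_two_le_neg_log_one_sub {u : ℝ} (hu₀ : 0 ≤ u) (hu₁ : u < 1) :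
    u + u ^ 2 / 2 ≤ -log (1 - u) := by
  have hseries := hasSum_pow_div_log_of_abs_lt_one (abs_lt.2 ⟨by linarith, hu₁⟩)
  have hpartial := sum_le_hasSum (range 2) (fun n _ ↦ by positivity) hseries
  norm_num [sum_range_succ] at hpartial
  exact hpartial

theorem pinsker_exponential (a b : ℝ) (ha : 0 < a) (hab : a < b) :
    Real.log (b / a) + a / b - 1 ≥ (b - a) ^ 2 / (2 * b ^ 2) := by
  have hb : 0 < b := ha.trans hab
  set u := 1 - a / b with hu
  have hu₀ : 0 ≤ u := by rw [hu, sub_nonneg, div_le_one hb]; exact hab.le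
  have hu₁ : u < 1 := by rw [hu]; linarith [div_pos ha hb]
  have hlog : log (b / a) = -log (1 - u) := by
    rw [hu, sub_sub_cancel, ← log_inv, inv_div]
  have hrhs : (b - a) ^ 2 / (2 * b ^ 2) = u ^ 2 / 2 := by
    rw [hu]; field_simp
  rw [hlog, hrhs]
  linarith [add_sq_div_two_le_neg_log_one_sub hu₀ hu₁]
end

section
/- Let A be a type, x ∈ A, f : ℕ → A, and for t ∈ ℕ let N(t) denote the number of s ∈ {1, …, t} with f(s) = x. Let t₀ ≤ T be natural numbers, S a finite subset of {t₀, …, T−1}, and B ∈ ℕ. Suppose that for every t with t₀ ≤ t < T, if t ∉ S and f(t+1) = x then N(t) ≤ B. Then N(T) ≤ N(t₀) + |S| + B + 1. -/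
open Classical in
theorem counting_lemma
    {A : Type*} (x : A) (f : ℕ → A)
    (N : ℕ → ℕ) (hNdef : ∀ t, N t = ((Finset.Icc 1 t).filter (fun s => f s = x)).card)
    (t₀ T : ℕ) (ht₀T : t₀ ≤ T)
    (S : Finset ℕ) (hS : S ⊆ Finset.Ico t₀ T)
    (B : ℕ)
    (hgood : ∀ t, t₀ ≤ t → t < T → t ∉ S → f (t + 1) = x → N t ≤ B) :
    N T ≤ N t₀ + S.card + B + 1 := by
  -- monotonicity of N
  have hmono : ∀ a b : ℕ, a ≤ b → N a ≤ N b := by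
    intro a b hab
    rw [hNdef, hNdef]
    exact Finset.card_le_card (Finset.filter_subset_filter _ (Finset.Icc_subset_Icc_right hab))
  -- step property
  have hstep : ∀ t : ℕ, f (t + 1) = x → N (t + 1) = N t + 1 := by
    intro t hft
    rw [hNdef, hNdef]
    have h1 : Finset.Icc 1 (t + 1) = insert (t + 1) (Finset.Icc 1 t) := by
      ext a; simp [Finset.mem_Icc]; omega
    rw [h1, Finset.filter_insert, if_pos hft, Finset.card_insert_of_notMem]
    intro hmem
    have := (Finset.mem_filter.mp hmem).1
    simp at this
  set P := (Finset.Ico t₀ T).filter (fun t => f (t + 1) = x) with hP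
  -- N T = N t₀ + P.card
  have hsplit : N T = N t₀ + P.card := by
    have hunion : Finset.Icc 1 t₀ ∪ Finset.Ioc t₀ T = Finset.Icc 1 T := by
      ext a; simp [Finset.mem_Icc, Finset.mem_Ioc]; omega
    have hdisj : Disjoint (Finset.Icc 1 t₀) (Finset.Ioc t₀ T) := by
      rw [Finset.disjoint_left]
      intro a ha hb
      exact absurd (Finset.mem_Icc.mp ha).2 (not_le.mpr (Finset.mem_Ioc.mp hb).1)
    have hcard : ((Finset.Ioc t₀ T).filter (fun s => f s = x)).card = P.card := by
      apply Finset.card_bij (fun s _ => s - 1)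
      · intro s hs
        obtain ⟨hs1, hs2⟩ := Finset.mem_filter.mp hs
        obtain ⟨hl, hr⟩ := Finset.mem_Ioc.mp hs1
        have hspos : 1 ≤ s := Nat.one_le_iff_ne_zero.mpr (by omega)
        refine Finset.mem_filter.mpr ⟨Finset.mem_Ico.mpr ⟨by omega, by omega⟩, ?_⟩
        have : s - 1 + 1 = s := by omega
        rw [this]; exact hs2
      · intro a ha b hb hab
        obtain ⟨ha1, _⟩ := Finset.mem_filter.mp ha
        obtain ⟨hb1, _⟩ := Finset.mem_filter.mp hb
        have := (Finset.mem_Ioc.mp ha1).1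
        have := (Finset.mem_Ioc.mp hb1).1
        omega
      · intro t ht
        obtain ⟨ht1, ht2⟩ := Finset.mem_filter.mp ht
        obtain ⟨hl, hr⟩ := Finset.mem_Ico.mp ht1
        exact ⟨t + 1, Finset.mem_filter.mpr ⟨Finset.mem_Ioc.mpr ⟨by omega, by omega⟩, ht2⟩, by omega⟩
    rw [hNdef T, hNdef t₀, ← hunion, Finset.filter_union,
      Finset.card_union_of_disjoint (Finset.disjoint_filter_filter hdisj), hcard]
  -- (P \ S).card ≤ B + 1
  have hPS : (P \ S).card ≤ B + 1 := by
    have : (P \ S).card ≤ (Finset.range (B + 1)).card := by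
      apply Finset.card_le_card_of_injOn N
      · intro t ht
        obtain ⟨htP, htS⟩ := Finset.mem_sdiff.mp ht
        obtain ⟨ht1, ht2⟩ := Finset.mem_filter.mp htP
        obtain ⟨hl, hr⟩ := Finset.mem_Ico.mp ht1
        exact Finset.mem_range.mpr (Nat.lt_succ_of_le (hgood t hl hr htS ht2))
      · intro a ha b hb hab
        by_contra hne
        rcases Nat.lt_or_ge a b with h | h
        · obtain ⟨haP, _⟩ := Finset.mem_sdiff.mp ha
          have hfa := (Finset.mem_filter.mp haP).2
          have : N a + 1 ≤ N b := (hstep a hfa) ▸ hmono (a + 1) b h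
          omega
        · have hlt : b < a := by omega
          obtain ⟨hbP, _⟩ := Finset.mem_sdiff.mp hb
          have hfb := (Finset.mem_filter.mp hbP).2
          have hba : b < a := by omega
          have : N b + 1 ≤ N a := (hstep b hfb) ▸ hmono (b + 1) a hba
          omega
    simpa using this
  have hPcard : P.card ≤ S.card + (B + 1) := by
    have := Finset.card_le_card_sdiff_add_card (s := P) (t := S)
    omega
  omega
end

section
/- Let (Ω, F, P) be a probability space, μ ∈ ℝ, and let (X_i)_{i∈ℕ} be independent real random variables on Ω each distributed according to the Gaussian measure with mean μ and variance 1. Then for every ε > 0 and every natural number m ≥ 1, P(⋃_{n ≥ m} {ω : ∑_{i=0}^{n−1} X_i(ω) ≤ n·(μ − ε)}) ≤ exp(−m·ε²/2). -/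
/-!
For `t = -ε` the process `Mₙ = exp (t Sₙ - n κ)`, with `exp κ = E[exp (t X₀)] = exp (-με + ε²/2)`
the Gaussian moment generating function, is a nonnegative martingale with `M₀ = 1`. On the event
`Sₙ ≤ n (μ - ε)` with `n ≥ m` we have `Mₙ ≥ exp (n ε² / 2) ≥ exp (m ε² / 2)`, so Ville's
inequality (Doob's maximal inequality, letting the horizon go to infinity) bounds its probability
by `exp (-m ε² / 2)`.
-/

open MeasureTheory ProbabilityTheory Real Finset
open scoped ENNReal NNReal

namespace MeasureTheory

variable {Ω : Type*} {mΩ : MeasurableSpace Ω} {P : Measure Ω}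

namespace Filtration

variable {β : Type*} [MeasurableSpace β] {X : ℕ → Ω → β} {hX : ∀ i, Measurable (X i)}

/-- Unlike `Filtration.natural`, the `n`-th σ-algebra is generated by the `X i` with `i < n`
only, so that `X n` is independent of it. -/
def past (X : ℕ → Ω → β) (hX : ∀ i, Measurable (X i)) : Filtration ℕ mΩ where
  seq n := ⨆ i < n, MeasurableSpace.comap (X i) inferInstance
  mono' _ _ hnk := biSup_mono fun _ hi => lt_of_lt_of_le hi hnk
  le' _ := iSup₂_le fun i _ => (hX i).comap_le

lemma measurable_past {i n : ℕ} (hin : i < n) : Measurable[past X hX n] (X i) :=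
  (comap_measurable (X i)).mono
    (le_iSup₂ (f := fun k (_ : k < n) => MeasurableSpace.comap (X k) inferInstance) i hin) le_rfl

end Filtration

theorem Martingale.ville_ineq [IsFiniteMeasure P] {ℱ : Filtration ℕ mΩ} {f : ℕ → Ω → ℝ}
    (hf : Martingale f ℱ P) (hnonneg : 0 ≤ f) (c : ℝ≥0) :
    c * P {ω | ∃ n, (c : ℝ) ≤ f n ω} ≤ ENNReal.ofReal (P[f 0]) := by
  set E : ℕ → Set Ω := fun N =>
    {ω | (c : ℝ) ≤ (range (N + 1)).sup' nonempty_range_add_one fun k => f k ω}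
  have hE_mono : Monotone E := fun N N' hNN' ω (hω : (c : ℝ) ≤ _) =>
    show (c : ℝ) ≤ _ from hω.trans (sup'_mono _ (range_subset_range.mpr (by omega)) _)
  have hsubset : {ω | ∃ n, (c : ℝ) ≤ f n ω} ⊆ ⋃ N, E N := fun ω ⟨n, hn⟩ =>
    Set.mem_iUnion.mpr ⟨n, hn.trans (le_sup' (fun k => f k ω) (self_mem_range_succ n))⟩
  have hE_le : ∀ N, c * P (E N) ≤ ENNReal.ofReal (P[f 0]) := fun N =>
    calc c * P (E N) ≤ ENNReal.ofReal (∫ ω in E N, f N ω ∂P) :=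
          maximal_ineq hf.submartingale hnonneg N
      _ ≤ ENNReal.ofReal (P[f N]) := ENNReal.ofReal_le_ofReal
          (setIntegral_le_integral (hf.integrable N) (.of_forall (hnonneg N)))
      _ = ENNReal.ofReal (P[f 0]) := by
        rw [← setIntegral_univ, ← setIntegral_univ (f := f 0), hf.setIntegral_eq N.zero_le .univ]
  calc c * P {ω | ∃ n, (c : ℝ) ≤ f n ω} ≤ c * ⨆ N, P (E N) := by
        grw [hsubset, hE_mono.measure_iUnion]
    _ ≤ ENNReal.ofReal (P[f 0]) := by
        rw [ENNReal.mul_iSup]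
        exact iSup_le hE_le

end MeasureTheory

namespace ProbabilityTheory

variable {Ω : Type*} {mΩ : MeasurableSpace Ω} {P : Measure Ω}

lemma iIndepFun.indep_comap_past {β : Type*} [MeasurableSpace β] {X : ℕ → Ω → β}
    (hindep : iIndepFun X P) (hX : ∀ i, Measurable (X i)) (n : ℕ) :
    Indep (MeasurableSpace.comap (X n) inferInstance) (Filtration.past X hX n) P := by
  have hdisj : Disjoint ({n} : Set ℕ) {k | k < n} := by simp
  have h := indep_iSup_of_disjoint (fun k => (hX k).comap_le) hindep hdisj
  rwa [_root_.iSup_singleton] at h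

lemma condExp_mul_eq_mul_integral_of_indep [IsFiniteMeasure P] {m m₁ : MeasurableSpace Ω}
    (hm : m ≤ mΩ) (hm₁ : m₁ ≤ mΩ) {f g : Ω → ℝ} (hf : StronglyMeasurable[m] f)
    (hg : StronglyMeasurable[m₁] g) (hindep : Indep m₁ m P) (hfg : Integrable (f * g) P)
    (hgint : Integrable g P) :
    P[f * g | m] =ᵐ[P] fun ω => f ω * P[g] := by
  filter_upwards [condExp_mul_of_stronglyMeasurable_left hf hfg hgint,
    condExp_indep_eq hm₁ hm hg hindep] with ω hmul hindep
  rw [hmul, Pi.mul_apply, hindep]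

lemma martingale_exp_mul_sum_sub [IsProbabilityMeasure P] {X : ℕ → Ω → ℝ}
    (hindep : iIndepFun X P) (hX : ∀ i, Measurable (X i)) {t κ : ℝ}
    (hmgf : ∀ i, mgf (X i) P t = exp κ) :
    Martingale (fun n ω => exp (t * ∑ i ∈ range n, X i ω - n * κ)) (Filtration.past X hX) P := by
  have hint : ∀ i, Integrable (fun ω => exp (t * X i ω)) P := fun i =>
    .of_integral_ne_zero (by rw [← mgf, hmgf]; positivity)
  have hadapted : StronglyAdapted (Filtration.past X hX)
      fun n ω => exp (t * ∑ i ∈ range n, X i ω - n * κ) := fun n =>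
    (((Finset.measurable_sum _ fun i hi => Filtration.measurable_past
      (mem_range.mp hi)).const_mul t).sub_const _).exp.stronglyMeasurable
  have hintegrable : ∀ n, Integrable (fun ω => exp (t * ∑ i ∈ range n, X i ω - n * κ)) P := by
    intro n
    simpa only [sub_eq_add_neg, exp_add, Finset.sum_apply] using
      (hindep.integrable_exp_mul_sum hX fun i _ => hint i).mul_const (exp (-(n * κ)))
  refine martingale_nat hadapted hintegrable fun n => ?_
  set g : Ω → ℝ := fun ω => exp (t * X n ω - κ)
  have hstep : (fun ω => exp (t * ∑ i ∈ range (n + 1), X i ω - (n + 1 : ℕ) * κ))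
      = (fun ω => exp (t * ∑ i ∈ range n, X i ω - n * κ)) * g := by
    ext ω
    simp only [Pi.mul_apply, g, ← exp_add, sum_range_succ]
    push_cast
    ring_nf
  have hg_integral : P[g] = 1 := by
    simp only [g, sub_eq_add_neg, exp_add, integral_mul_const]
    rw [← mgf, hmgf, ← exp_add, add_neg_cancel, exp_zero]
  have hg : StronglyMeasurable[MeasurableSpace.comap (X n) inferInstance] g :=
    (((comap_measurable (X n)).const_mul t).sub_const _).exp.stronglyMeasurable
  rw [hstep]
  filter_upwards [condExp_mul_eq_mul_integral_of_indep ((Filtration.past X hX).le n)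
    (hX n).comap_le (hadapted n) hg (hindep.indep_comap_past hX n) (hstep ▸ hintegrable (n + 1))
    (by simpa only [g, sub_eq_add_neg, exp_add] using (hint n).mul_const _)] with ω hω
  rw [hω, hg_integral, mul_one]

end ProbabilityTheory

theorem gaussian_time_uniform_concentration_general
    {Ω : Type*} [MeasurableSpace Ω] (P : Measure Ω) [IsProbabilityMeasure P]
    (μ : ℝ) (X : ℕ → Ω → ℝ)
    (hindep : iIndepFun X P)
    (hmeas : ∀ i, Measurable (X i))
    (hdist : ∀ i, P.map (X i) = gaussianReal μ 1)
    (ε : ℝ) (hε : 0 < ε) (m : ℕ) :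
    P (⋃ n ∈ {n : ℕ | m ≤ n}, {ω | ∑ i ∈ Finset.range n, X i ω ≤ (n : ℝ) * (μ - ε)})
      ≤ ENNReal.ofReal (Real.exp (-(m : ℝ) * ε ^ 2 / 2)) := by
  set κ := μ * -ε + (-ε) ^ 2 / 2 with hκ
  have hmgf (i : ℕ) : mgf (X i) P (-ε) = exp κ := by
    simpa only [NNReal.coe_one, one_mul] using mgf_gaussianReal (hdist i) (-ε)
  have hM := martingale_exp_mul_sum_sub hindep hmeas hmgf
  have hsubset : (⋃ n ∈ {n : ℕ | m ≤ n}, {ω | ∑ i ∈ range n, X i ω ≤ (n : ℝ) * (μ - ε)}) ⊆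
      {ω | ∃ n, exp (m * ε ^ 2 / 2) ≤ exp (-ε * ∑ i ∈ range n, X i ω - n * κ)} := by
    simp only [Set.subset_def, Set.mem_iUnion, Set.mem_ofPred_eq, exp_le_exp]
    rintro ω ⟨n, hmn, hsum⟩
    have hmn : (m : ℝ) ≤ n := by exact_mod_cast hmn
    refine ⟨n, ?_⟩
    rw [hκ]
    linarith [mul_le_mul_of_nonneg_left hsum hε.le, mul_le_mul_of_nonneg_right hmn (sq_nonneg ε)]
  have hville := hM.ville_ineq (fun n ω => (exp_pos _).le) (exp (m * ε ^ 2 / 2)).toNNReal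
  simp only [Real.coe_toNNReal _ (exp_pos _).le, range_zero, sum_empty, CharP.cast_eq_zero,
    mul_zero, zero_mul, sub_zero, exp_zero, integral_const, probReal_univ, smul_eq_mul, mul_one,
    ENNReal.ofReal_one] at hville
  calc _ ≤ _ := measure_mono hsubset
    _ ≤ (ENNReal.ofReal (exp (m * ε ^ 2 / 2)))⁻¹ :=
        ENNReal.le_inv_iff_mul_le.mpr (by rwa [mul_comm])
    _ = _ := by rw [← ENNReal.ofReal_inv_of_pos (exp_pos _), ← exp_neg, neg_mul, neg_div]

theorem gaussian_time_uniform_concentration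
    {Ω : Type*} [MeasurableSpace Ω] (P : Measure Ω) [IsProbabilityMeasure P]
    (μ : ℝ) (X : ℕ → Ω → ℝ)
    (hindep : iIndepFun X P)
    (hmeas : ∀ i, Measurable (X i))
    (hdist : ∀ i, P.map (X i) = gaussianReal μ 1)
    (ε : ℝ) (hε : 0 < ε) (m : ℕ) (hm : 1 ≤ m) :
    P (⋃ n ∈ {n : ℕ | m ≤ n}, {ω | ∑ i ∈ Finset.range n, X i ω ≤ (n : ℝ) * (μ - ε)})
      ≤ ENNReal.ofReal (Real.exp (-(m : ℝ) * ε ^ 2 / 2)) :=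
  gaussian_time_uniform_concentration_general P μ X hindep hmeas hdist ε hε m
end

section
/- Let (Ω, F, P) be a probability space, p ∈ (0,1), and let (X_i)_{i∈ℕ} be independent real random variables on Ω each distributed according to the Bernoulli measure (1−p)·δ₀ + p·δ₁ on ℝ. Then for every x with 0 < x < p and every natural number n ≥ 1, P({ω : ∑_{i=0}^{n−1} X_i(ω) ≤ n·x}) ≤ exp(−n·kl(x,p)). -/
/-!
Chernoff's method: for `t ≤ 0`, Markov's inequality applied to `exp (t S_n)` and independence
give `P(S_n ≤ n x) ≤ (exp (-t x) · 𝔼[exp (t X₀)])ⁿ = (exp (-t x) (1 - p + p eᵗ))ⁿ`.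
The exponent is minimised at `eᵗ = x (1 - p) / (p (1 - x))`, which is `≤ 1` because `x ≤ p`,
and there `exp (-t x) (1 - p + p eᵗ) = exp (-kl(x, p))`.
-/

open MeasureTheory ProbabilityTheory Real

/-- The Bernoulli measure `(1−p)·δ₀ + p·δ₁` on `ℝ`. -/
noncomputable def bernoulliMeasure (p : ℝ) : Measure ℝ :=
  ENNReal.ofReal (1 - p) • Measure.dirac 0 + ENNReal.ofReal p • Measure.dirac 1

lemma integrable_bernoulliMeasure (p : ℝ) (f : ℝ → ℝ) :
    Integrable f (_root_.bernoulliMeasure p) :=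
  ((integrable_dirac enorm_lt_top).smul_measure ENNReal.ofReal_ne_top).add_measure
    ((integrable_dirac enorm_lt_top).smul_measure ENNReal.ofReal_ne_top)

lemma integral_bernoulliMeasure {p : ℝ} (hp0 : 0 ≤ p) (hp1 : p ≤ 1) (f : ℝ → ℝ) :
    ∫ y, f y ∂(_root_.bernoulliMeasure p) = (1 - p) * f 0 + p * f 1 := by
  rw [_root_.bernoulliMeasure,
    integral_add_measure ((integrable_dirac enorm_lt_top).smul_measure ENNReal.ofReal_ne_top)
      ((integrable_dirac enorm_lt_top).smul_measure ENNReal.ofReal_ne_top),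
    integral_smul_measure, integral_smul_measure, integral_dirac, integral_dirac,
    ENNReal.toReal_ofReal (by linarith), ENNReal.toReal_ofReal hp0, smul_eq_mul, smul_eq_mul]

section MapEqBernoulli

variable {Ω : Type*} [MeasurableSpace Ω] {P : Measure Ω} {Y : Ω → ℝ} {p : ℝ}

lemma integrable_exp_mul_of_map_eq_bernoulliMeasure (hY : Measurable Y)
    (hdist : P.map Y = _root_.bernoulliMeasure p) (t : ℝ) :
    Integrable (fun ω ↦ exp (t * Y ω)) P := by
  have h := integrable_bernoulliMeasure p (fun y ↦ exp (t * y))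
  rw [← hdist] at h
  exact (integrable_map_measure (by fun_prop) hY.aemeasurable).mp h

lemma mgf_of_map_eq_bernoulliMeasure (hp0 : 0 ≤ p) (hp1 : p ≤ 1) (hY : Measurable Y)
    (hdist : P.map Y = _root_.bernoulliMeasure p) (t : ℝ) :
    mgf Y P t = 1 - p + p * exp t := by
  rw [mgf, ← integral_map (f := fun y ↦ exp (t * y)) hY.aemeasurable (by fun_prop), hdist,
    integral_bernoulliMeasure hp0 hp1]
  simp

end MapEqBernoulli

lemma measureReal_sum_le_le_of_map_eq_bernoulliMeasure {Ω : Type*} [MeasurableSpace Ω]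
    {P : Measure Ω} [IsProbabilityMeasure P] {p : ℝ} (hp0 : 0 ≤ p) (hp1 : p ≤ 1)
    {X : ℕ → Ω → ℝ} (hindep : iIndepFun X P) (hmeas : ∀ i, Measurable (X i))
    (hdist : ∀ i, P.map (X i) = _root_.bernoulliMeasure p) {t : ℝ} (ht : t ≤ 0) (n : ℕ)
    (a : ℝ) :
    P.real {ω | ∑ i ∈ Finset.range n, X i ω ≤ a} ≤
      exp (-t * a) * (1 - p + p * exp t) ^ n := by
  have hint : Integrable (fun ω ↦ exp (t * (∑ i ∈ Finset.range n, X i) ω)) P :=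
    hindep.integrable_exp_mul_sum hmeas fun i _ ↦
      integrable_exp_mul_of_map_eq_bernoulliMeasure (hmeas i) (hdist i) t
  have hmgf : mgf (∑ i ∈ Finset.range n, X i) P t = (1 - p + p * exp t) ^ n := by
    simp [hindep.mgf_sum hmeas, mgf_of_map_eq_bernoulliMeasure hp0 hp1 (hmeas _) (hdist _)]
  simpa [Finset.sum_apply, hmgf] using measure_le_le_exp_mul_mgf a ht hint

lemma exp_neg_mul_mul_eq_exp_neg_klBer {x p t : ℝ} (hx0 : 0 < x) (hx1 : x < 1) (hp0 : 0 < p)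
    (hp1 : p < 1) (ht : exp t = x * (1 - p) / (p * (1 - x))) :
    exp (-t * x) * (1 - p + p * exp t) = exp (-klBer x p) := by
  have h1x : 0 < 1 - x := by linarith
  have h1p : 0 < 1 - p := by linarith
  have ht_log : t = log x + log (1 - p) - log p - log (1 - x) := by
    rw [← log_exp t, ht, log_div (by positivity) (by positivity), log_mul hx0.ne' h1p.ne',
      log_mul hp0.ne' h1x.ne']
    ring
  have hmgf : 1 - p + p * exp t = exp (log (1 - p) - log (1 - x)) := by
    rw [← log_div h1p.ne' h1x.ne', exp_log (by positivity), ht]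
    field_simp
    ring
  rw [hmgf, ← exp_add, klBer, log_div hx0.ne' hp0.ne', log_div h1x.ne' h1p.ne', ht_log]
  ring_nf

theorem bernoulli_chernoff_lower_general
    {Ω : Type*} [MeasurableSpace Ω] (P : Measure Ω) [IsProbabilityMeasure P]
    (p : ℝ) (hp : p ∈ Set.Ioo (0 : ℝ) 1) (X : ℕ → Ω → ℝ)
    (hindep : iIndepFun X P)
    (hmeas : ∀ i, Measurable (X i))
    (hdist : ∀ i, P.map (X i) = _root_.bernoulliMeasure p)
    (x : ℝ) (hx : 0 < x) (hxp : x < p) (n : ℕ) :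
    P {ω | ∑ i ∈ Finset.range n, X i ω ≤ (n : ℝ) * x}
      ≤ ENNReal.ofReal (Real.exp (-(n : ℝ) * klBer x p)) := by
  obtain ⟨hp0, hp1⟩ := hp
  have hx1 : x < 1 := hxp.trans hp1
  have hratio_pos : 0 < x * (1 - p) / (p * (1 - x)) := by
    have := sub_pos.2 hx1; have := sub_pos.2 hp1; positivity
  have hratio_le : x * (1 - p) / (p * (1 - x)) ≤ 1 := by
    rw [div_le_one (by nlinarith)]
    nlinarith
  set t := log (x * (1 - p) / (p * (1 - x)))
  have ht : t ≤ 0 := log_nonpos hratio_pos.le hratio_le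
  have hchernoff := measureReal_sum_le_le_of_map_eq_bernoulliMeasure hp0.le hp1.le hindep hmeas
    hdist ht n (n * x)
  have hfactor : exp (-t * (n * x)) * (1 - p + p * exp t) ^ n = exp (-n * klBer x p) := by
    rw [show -t * (n * x) = n * (-t * x) by ring, exp_nat_mul, ← mul_pow,
      exp_neg_mul_mul_eq_exp_neg_klBer hx hx1 hp0 hp1 (exp_log hratio_pos), ← exp_nat_mul]
    ring_nf
  rw [← ENNReal.ofReal_toReal (measure_ne_top P _)]
  exact ENNReal.ofReal_le_ofReal (hchernoff.trans_eq hfactor)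

theorem bernoulli_chernoff_lower
    {Ω : Type*} [MeasurableSpace Ω] (P : Measure Ω) [IsProbabilityMeasure P]
    (p : ℝ) (hp : p ∈ Set.Ioo (0 : ℝ) 1) (X : ℕ → Ω → ℝ)
    (hindep : iIndepFun X P)
    (hmeas : ∀ i, Measurable (X i))
    (hdist : ∀ i, P.map (X i) = _root_.bernoulliMeasure p)
    (x : ℝ) (hx : 0 < x) (hxp : x < p) (n : ℕ) (hn : 1 ≤ n) :
    P {ω | ∑ i ∈ Finset.range n, X i ω ≤ (n : ℝ) * x}
      ≤ ENNReal.ofReal (Real.exp (-(n : ℝ) * klBer x p)) :=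
  bernoulli_chernoff_lower_general P p hp X hindep hmeas hdist x hx hxp n
end
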